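/- For every odd positive integer m there exists a finite group G of order 32m and a subgroup H of G of index 2 such that ψ(G) > ψ(H)·|G : H|². -/
import Mathlib


/-- `psi G` is the sum of the orders of all elements of `G`. -/
noncomputable def psi (G : Type*) [Group G] : ℕ := ∑ᶠ g : G, orderOf g

/-- `psiC n` is the sum of the orders of all elements of the cyclic group of order `n`. -/
noncomputable def psiC (n : ℕ) : ℕ := psi (Multiplicative (ZMod n))

/-- A group is supersolvable if it admits a normal series (all terms normal in `G`)
with cyclic factors. -/
def IsSupersolvable (G : Type*) [Group G] : Prop :=
  ∃ (n : ℕ) (H : Fin (n + 1) → Subgroup G) (hnorm : ∀ i, (H i).Normal),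
    H 0 = ⊥ ∧ H (Fin.last n) = ⊤ ∧
    ∀ i : Fin n, H i.castSucc ≤ H i.succ ∧
      letI := (hnorm i.castSucc).subgroupOf (H i.succ)
      IsCyclic (↥(H i.succ) ⧸ (H i.castSucc).subgroupOf (H i.succ))

/-! ### An explicit group of order 32

We construct a group `GG` of order 32 (a non-split extension of `D₈ × C₂` by `C₂`)
whose multiplication table is encoded in the base-32 digits of the constant `T`.
It has an index-2 subgroup `H0 ≅ D₈ × C₂` with `ψ(GG) = 167 > 156 = 4 · ψ(H0)`. -/

/-- The multiplication table of a group of order 32, encoded in base 32: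
the product of elements `a` and `b` is digit number `32 * a + b`. -/
def T : ℕ := 66058919606210404780356629443685147805613061387576504861706729891684253660328759016361407653376732742001245527999102098830742638519775601050769894122536347519580617348806260209969863083399780840904858338280658336421467411929182370765922916277221351063693097533498344109305353489942130201234279119752875809689155666602126561512082241617786917328735747766723911511823493806589762734600853846272794046796570442604096306317389585444347514981754856571135347818372938887534866315564639800654728449230171568783515440946136515103075999960982745251526512182138129142273216394653768230689371176206950498285184298312744722641872080275549134753833987322781641258613313798110160026455909451602089937857935467867958268592726000441198914086046180180388892688530058943079537654413573798645088651532502891793807560328018035922574557015578601605935580852361328613156956512574574331899396817916936506214067629279043771869428806083360565348109014023655258768085223080360164319708617034172085886861075368094487937546380365557956398945683963846654624656543102469419742075801827341754619318428257843722542184719921400313994873229091555208844351000706630044749916883745534439085422164505792541456847066886792889685514732555884127739592588619757605436498522415968618309164639255466126654865093919584397551633483353966121619551169211049239433452280294825394248276453041908167478366050058555381550585119242831883020265924389134925412481263808678051105065600630777751705458997221606492147465353867063089016194959364176499489392385177458273516008881977791953150008199200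

/-- Multiplication on `{0, ..., 31}` via table lookup. -/
def gmul (n m : ℕ) : ℕ := T / 32 ^ (32 * n + m) % 32

/-- The inverse operation: `n⁻¹ = n ^ 7`. -/
def ginv (n : ℕ) : ℕ := gmul (gmul (gmul n n) (gmul n n)) (gmul (gmul n n) n)

set_option exponentiation.threshold 10000 in
lemma gmul_lt : ∀ a < 32, ∀ b < 32, gmul a b < 32 := by decide

set_option maxHeartbeats 4000000 in
set_option exponentiation.threshold 10000 in
lemma gmul_assoc : ∀ a < 32, ∀ b < 32, ∀ c < 32,
    gmul (gmul a b) c = gmul a (gmul b c) := by decide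

set_option exponentiation.threshold 10000 in
lemma gmul_one : ∀ a < 32, gmul 0 a = a := by decide

set_option exponentiation.threshold 10000 in
lemma gmul_inv : ∀ a < 32, gmul (ginv a) a = 0 := by decide

/-- The group of order 32. -/
structure GG where val : Fin 32
deriving DecidableEq, Fintype

namespace GG

instance : One GG := ⟨⟨⟨0, by norm_num⟩⟩⟩
instance : Mul GG := ⟨fun x y => ⟨⟨gmul x.val y.val, gmul_lt _ x.val.isLt _ y.val.isLt⟩⟩⟩
instance : Inv GG := ⟨fun x => ((x * x) * (x * x)) * ((x * x) * x)⟩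

lemma ext' {x y : GG} (h : (x.val : ℕ) = y.val) : x = y := by
  cases x; cases y; simpa [Fin.ext_iff] using h

instance : Group GG :=
  Group.ofLeftAxioms
    (fun a b c => ext' (gmul_assoc _ a.val.isLt _ b.val.isLt _ c.val.isLt))
    (fun a => ext' (gmul_one _ a.val.isLt))
    (fun a => ext' (gmul_inv _ a.val.isLt))

set_option exponentiation.threshold 10000 in
lemma pow8 (g : GG) : g ^ 8 = 1 := by
  have key : ∀ g : GG, ((((((g * g) * g) * g) * g) * g) * g) * g = 1 := by decide
  calc g ^ 8 = ((((((g * g) * g) * g) * g) * g) * g) * g := by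
        rw [show (8 : ℕ) = 7 + 1 from rfl, pow_succ, show (7 : ℕ) = 6 + 1 from rfl, pow_succ,
          show (6 : ℕ) = 5 + 1 from rfl, pow_succ, show (5 : ℕ) = 4 + 1 from rfl, pow_succ,
          show (4 : ℕ) = 3 + 1 from rfl, pow_succ, show (3 : ℕ) = 2 + 1 from rfl, pow_succ,
          show (2 : ℕ) = 1 + 1 from rfl, pow_succ, pow_one]
    _ = 1 := key g

end GG

set_option exponentiation.threshold 10000 in
/-- The index-2 subgroup of `GG` (isomorphic to `D₈ × C₂`). -/
def H0 : Subgroup GG where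
  carrier := {x | (x.val : ℕ) < 16}
  one_mem' := by decide
  mul_mem' := by
    have : ∀ a b : GG, (a.val : ℕ) < 16 → (b.val : ℕ) < 16 → ((a * b).val : ℕ) < 16 := by decide
    intro a b ha hb; exact this a b ha hb
  inv_mem' := by
    have : ∀ a : GG, (a.val : ℕ) < 16 → ((a⁻¹).val : ℕ) < 16 := by decide
    intro a ha; exact this a ha

instance : DecidablePred (· ∈ H0) := fun x => inferInstanceAs (Decidable ((x.val : ℕ) < 16))

/-! ### General lemmas about `psi` -/

lemma psi_fintype (G : Type*) [Group G] [Fintype G] : psi G = ∑ g : G, orderOf g :=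
  finsum_eq_sum_of_fintype _

/-- Order of an element in a group of exponent dividing 8. -/
lemma ord_helper {G : Type*} [Group G] [DecidableEq G] (g : G) (h8 : g ^ 8 = 1) :
    orderOf g = if g ^ 4 = 1 then (if g ^ 2 = 1 then (if g = 1 then 1 else 2) else 4) else 8 := by
  have hp : Fact (Nat.Prime 2) := ⟨Nat.prime_two⟩
  split_ifs with h4 h2 h1
  · simp [h1]
  · exact orderOf_eq_prime h2 h1
  · have : orderOf g = 2 ^ (1 + 1) :=
      orderOf_eq_prime_pow (by rw [pow_one]; exact h2)
        (by rw [show (2 : ℕ) ^ (1 + 1) = 4 by norm_num]; exact h4)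
    simpa using this
  · have : orderOf g = 2 ^ (2 + 1) :=
      orderOf_eq_prime_pow (by rw [show (2 : ℕ) ^ 2 = 4 by norm_num]; exact h4)
        (by rw [show (2 : ℕ) ^ (2 + 1) = 8 by norm_num]; exact h8)
    simpa using this

lemma psi_congr {A B : Type*} [Group A] [Group B] [Fintype A] [Fintype B] (e : A ≃* B) :
    psi A = psi B := by
  rw [psi_fintype, psi_fintype]
  exact Fintype.sum_bijective e e.bijective _ _
    (fun a => (orderOf_injective e.toMonoidHom e.injective a).symm)

lemma psi_prod (A B : Type*) [Group A] [Group B] [Fintype A] [Fintype B]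
    (h : ∀ (a : A) (b : B), Nat.Coprime (orderOf a) (orderOf b)) :
    psi (A × B) = psi A * psi B := by
  rw [psi_fintype, psi_fintype, psi_fintype, Fintype.sum_prod_type, Finset.sum_mul_sum]
  exact Finset.sum_congr rfl fun a _ => Finset.sum_congr rfl fun b _ => by
    rw [Prod.orderOf_mk, (h a b).lcm_eq_mul]

set_option exponentiation.threshold 10000 in
set_option maxHeartbeats 1000000 in
lemma psi_GG : psi GG = 167 := by
  rw [psi_fintype]
  rw [Finset.sum_congr rfl fun g _ => ord_helper g (GG.pow8 g)]
  decide

set_option exponentiation.threshold 10000 in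
set_option maxHeartbeats 1000000 in
lemma psi_H0 : psi H0 = 39 := by
  rw [psi_fintype]
  have key : ∀ h : H0, orderOf h = orderOf (h : GG) :=
    fun h => (orderOf_injective H0.subtype (Subgroup.subtype_injective H0) h).symm
  rw [Finset.sum_congr rfl fun h _ => (key h).trans (ord_helper (h : GG) (GG.pow8 _))]
  decide

lemma card_GG : Nat.card GG = 32 := by
  rw [Nat.card_eq_fintype_card]; decide

set_option exponentiation.threshold 10000 in
lemma card_H0 : Nat.card H0 = 16 := by
  rw [Nat.card_eq_fintype_card]; decide

/-- For every odd positive integer $m$ there is a finite group $G$ of order $32m$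
and a subgroup $H \le G$ of index 2 with $\psi(G) > \psi(H)|G:H|^2$. -/
theorem exists_counterexample_HLM_of_odd (m : ℕ) (hm : 0 < m) (hodd : Odd m) :
    ∃ (G : Type) (_ : Group G) (_ : Finite G) (H : Subgroup G),
      Nat.card G = 32 * m ∧ H.index = 2 ∧
      psi H * H.index ^ 2 < psi G := by
  haveI : NeZero m := ⟨hm.ne'⟩
  haveI : Fintype (Multiplicative (ZMod m)) := inferInstanceAs (Fintype (ZMod m))
  have hcardM : Nat.card (Multiplicative (ZMod m)) = m := by
    rw [show Nat.card (Multiplicative (ZMod m)) = Nat.card (ZMod m) from rfl, Nat.card_zmod]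
  have co32 : Nat.Coprime 32 m := by
    have : Nat.Coprime (2 ^ 5) m := (Nat.coprime_two_left.mpr hodd).pow_left 5
    simpa using this
  have hcoM : ∀ b : Multiplicative (ZMod m), orderOf b ∣ m := fun b => by have := orderOf_dvd_natCard b; rwa [hcardM] at this
  have hcoGG : ∀ (a : GG) (b : Multiplicative (ZMod m)), Nat.Coprime (orderOf a) (orderOf b) := by
    intro a b
    have ha : orderOf a ∣ 32 := by rw [← card_GG]; exact orderOf_dvd_natCard a
    exact Nat.Coprime.coprime_dvd_left ha (Nat.Coprime.coprime_dvd_right (hcoM b) co32)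
  have hcoH0 : ∀ (a : H0) (b : Multiplicative (ZMod m)), Nat.Coprime (orderOf a) (orderOf b) := by
    intro a b
    have ha : orderOf a ∣ 32 := by
      refine dvd_trans ?_ (show (16:ℕ) ∣ 32 by norm_num)
      rw [← card_H0]; exact orderOf_dvd_natCard a
    exact Nat.Coprime.coprime_dvd_left ha (Nat.Coprime.coprime_dvd_right (hcoM b) co32)
  have eH : ↥(H0.prod (⊤ : Subgroup (Multiplicative (ZMod m)))) ≃* ↥H0 × Multiplicative (ZMod m) :=
    (Subgroup.prodEquiv H0 ⊤).trans ((MulEquiv.refl ↥H0).prodCongr Subgroup.topEquiv)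
  have hcardH : Nat.card ↥(H0.prod (⊤ : Subgroup (Multiplicative (ZMod m)))) = 16 * m := by
    rw [Nat.card_congr eH.toEquiv, Nat.card_prod, card_H0, hcardM]
  have hcardG : Nat.card (GG × Multiplicative (ZMod m)) = 32 * m := by
    rw [Nat.card_prod, card_GG, hcardM]
  have hidx : (H0.prod (⊤ : Subgroup (Multiplicative (ZMod m)))).index = 2 := by
    have h1 := Subgroup.index_mul_card (H0.prod (⊤ : Subgroup (Multiplicative (ZMod m))))
    rw [hcardH, hcardG] at h1
    have h2 : (H0.prod (⊤ : Subgroup (Multiplicative (ZMod m)))).index * (16 * m) = 2 * (16 * m) := by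
      rw [h1]; ring
    exact Nat.eq_of_mul_eq_mul_right (by positivity) h2
  refine ⟨GG × Multiplicative (ZMod m), inferInstance, inferInstance, H0.prod ⊤, hcardG, hidx, ?_⟩
  rw [hidx]
  haveI : Fintype ↥(H0.prod (⊤ : Subgroup (Multiplicative (ZMod m)))) := Fintype.ofFinite _
  have hψH : psi ↥(H0.prod (⊤ : Subgroup (Multiplicative (ZMod m)))) = 39 * psi (Multiplicative (ZMod m)) := by
    rw [psi_congr eH, psi_prod _ _ hcoH0, psi_H0]
  have hψG : psi (GG × Multiplicative (ZMod m)) = 167 * psi (Multiplicative (ZMod m)) := by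
    rw [psi_prod _ _ hcoGG, psi_GG]
  have hψM : 1 ≤ psi (Multiplicative (ZMod m)) := by
    rw [psi_fintype]
    calc 1 = orderOf (1 : Multiplicative (ZMod m)) := orderOf_one.symm
      _ ≤ ∑ g : Multiplicative (ZMod m), orderOf g :=
        Finset.single_le_sum (fun i _ => Nat.zero_le _) (Finset.mem_univ (1 : Multiplicative (ZMod m)))
  rw [hψH, hψG]
  nlinarith
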